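/- arXiv:2202.04997 — 2 statements merged into one kernel-verified Lean document; each statement's English description precedes it below -/
import Mathlib

section
/- For any graphs G and H with n and m vertices respectively, F(G □ H) ≥ max{m·F(G), n·F(H)}, where G □ H is the Cartesian product. -/
namespace ZeroForcing

/-- One step of the zero forcing process: all vertices forced from blue set `S`
(a blue vertex with exactly one white neighbor forces that neighbor). -/
def step {V : Type*} (G : SimpleGraph V) (S : Set V) : Set V :=
  S ∪ {v | ∃ u ∈ S, G.Adj u v ∧ ∀ w, G.Adj u w → w ∉ S → w = v}

/-- `S` is a zero forcing set: iterating the color-change rule makes everything blue. -/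
def IsZeroForcingSet {V : Type*} (G : SimpleGraph V) (S : Set V) : Prop :=
  ∃ k, (step G)^[k] S = Set.univ

/-- `S` is a failed zero forcing set. -/
def IsFailedSet {V : Type*} (G : SimpleGraph V) (S : Set V) : Prop :=
  ¬ IsZeroForcingSet G S

/-- The zero forcing number `Z(G)`. -/
noncomputable def Z {V : Type*} (G : SimpleGraph V) : ℕ :=
  sInf {k | ∃ S : Set V, S.ncard = k ∧ IsZeroForcingSet G S}

/-- The failed zero forcing number `F(G)`. -/
noncomputable def F {V : Type*} (G : SimpleGraph V) : ℕ :=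
  sSup {k | ∃ S : Set V, S.ncard = k ∧ IsFailedSet G S}

/-- The strong product of two simple graphs. -/
def strongProd {α β : Type*} (G : SimpleGraph α) (H : SimpleGraph β) :
    SimpleGraph (α × β) where
  Adj x y := x ≠ y ∧ (x.1 = y.1 ∨ G.Adj x.1 y.1) ∧ (x.2 = y.2 ∨ H.Adj x.2 y.2)
  symm := by
    constructor
    rintro x y ⟨h1, h2, h3⟩
    exact ⟨h1.symm, h2.imp Eq.symm (fun h => G.adj_symm h), h3.imp Eq.symm (fun h => H.adj_symm h)⟩
  loopless := ⟨fun x h => h.1 rfl⟩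

/-- The lexicographic product of two simple graphs. -/
def lexProd {α β : Type*} (G : SimpleGraph α) (H : SimpleGraph β) :
    SimpleGraph (α × β) where
  Adj x y := G.Adj x.1 y.1 ∨ (x.1 = y.1 ∧ H.Adj x.2 y.2)
  symm := by
    constructor
    rintro x y (h | ⟨h1, h2⟩)
    · exact Or.inl h.symm
    · exact Or.inr ⟨h1.symm, h2.symm⟩
  loopless := by
    constructor
    rintro x (h | ⟨h1, h2⟩)
    · exact G.loopless.irrefl _ h
    · exact H.loopless.irrefl _ h2

/-- The corona `G ∘ H`: one copy of `G` and, for each vertex `a` of `G`, a copy of `H`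
all of whose vertices are joined to `a`. -/
def corona {α β : Type*} (G : SimpleGraph α) (H : SimpleGraph β) :
    SimpleGraph (α ⊕ α × β) where
  Adj x y :=
    match x, y with
    | .inl a, .inl a' => G.Adj a a'
    | .inl a, .inr p => a = p.1
    | .inr p, .inl a' => p.1 = a'
    | .inr p, .inr q => p.1 = q.1 ∧ H.Adj p.2 q.2
  symm := by
    constructor
    rintro (a | p) (a' | q) h
    · exact G.adj_symm h
    · exact h.symm
    · exact h.symm
    · exact ⟨h.1.symm, H.adj_symm h.2⟩
  loopless := by
    constructor
    rintro (a | p) h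
    · exact G.loopless.irrefl _ h
    · exact H.loopless.irrefl _ h.2

end ZeroForcing

/-!
Both projections `G □ H → G` and `G □ H → H` map every edge to an edge or collapse it to a
vertex, and lift every edge at the image of a vertex to an edge at that vertex. Along such a
map, whatever is forced from the preimage of a set `A` lies in the preimage of what is forced
from `A`; so the preimage of a failed set is failed. The preimage of a failed set of `G` of
size `F(G)` is a failed set of `G □ H` of size `m · F(G)`, and symmetrically for `H`.
-/

namespace ZeroForcing

variable {V W : Type*} {G : SimpleGraph V} {G' : SimpleGraph W}

lemma step_mono (G : SimpleGraph V) : Monotone (step G) := by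
  rintro A B hAB v (hv | ⟨u, hu, hadj, hforce⟩)
  · exact Or.inl (hAB hv)
  · exact Or.inr ⟨u, hAB hu, hadj, fun w hw hwB => hforce w hw (fun hwA => hwB (hAB hwA))⟩

section Lifting

variable {f : W → V} (hadj : ∀ x y, G'.Adj x y → f x = f y ∨ G.Adj (f x) (f y))
  (hlift : ∀ x v, G.Adj (f x) v → ∃ y, G'.Adj x y ∧ f y = v)
include hadj hlift

lemma step_preimage_subset (A : Set V) : step G' (f ⁻¹' A) ⊆ f ⁻¹' step G A := by
  rintro y (hy | ⟨x, hx, hxy, hforce⟩)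
  · exact Or.inl hy
  rcases hadj x y hxy with hfxy | hfxy
  · exact Or.inl (hfxy ▸ hx)
  refine Or.inr ⟨f x, hx, hfxy, fun v hv hvA => ?_⟩
  obtain ⟨z, hxz, rfl⟩ := hlift x v hv
  rw [hforce z hxz hvA]

lemma iterate_step_preimage_subset (A : Set V) (k : ℕ) :
    (step G')^[k] (f ⁻¹' A) ⊆ f ⁻¹' (step G)^[k] A := by
  induction k with
  | zero => rfl
  | succ k ih =>
    rw [Function.iterate_succ_apply', Function.iterate_succ_apply']
    exact (step_mono G' ih).trans (step_preimage_subset hadj hlift _)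

lemma IsFailedSet.preimage (hf : Function.Surjective f) {A : Set V} (hA : IsFailedSet G A) :
    IsFailedSet G' (f ⁻¹' A) := by
  rintro ⟨k, hk⟩
  refine hA ⟨k, ?_⟩
  rw [← Set.univ_subset_iff, ← hf.range_eq, ← Set.preimage_eq_univ_iff]
  exact Set.eq_univ_of_univ_subset (hk ▸ iterate_step_preimage_subset hadj hlift A k)

end Lifting

lemma bddAbove_failedSetCards [Finite V] (G : SimpleGraph V) :
    BddAbove {k | ∃ S : Set V, S.ncard = k ∧ IsFailedSet G S} := by
  refine ⟨Nat.card V, ?_⟩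
  rintro k ⟨S, rfl, -⟩
  exact Set.ncard_le_card S

lemma mul_F_le_F [Finite V] [Finite W] {c : ℕ}
    (h : ∀ S, IsFailedSet G S → ∃ T, IsFailedSet G' T ∧ c * S.ncard ≤ T.ncard) :
    c * F G ≤ F G' := by
  rcases Set.eq_empty_or_nonempty {k | ∃ S : Set V, S.ncard = k ∧ IsFailedSet G S} with
    hempty | hne
  · simp [F, hempty]
  obtain ⟨S, hS, hSfail⟩ := Nat.sSup_mem hne (bddAbove_failedSetCards G)
  obtain ⟨T, hTfail, hST⟩ := h S hSfail
  calc c * F G = c * S.ncard := by rw [F, hS]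
    _ ≤ T.ncard := hST
    _ ≤ F G' := le_csSup (bddAbove_failedSetCards G') ⟨T, rfl, hTfail⟩

variable {α β : Type*} (G : SimpleGraph α) (H : SimpleGraph β)

lemma card_mul_F_le_F_boxProd_left [Fintype α] [Fintype β] :
    Fintype.card β * F G ≤ F (G □ H) := by
  rcases isEmpty_or_nonempty β with _ | _
  · simp
  refine mul_F_le_F fun S hS => ⟨Prod.fst ⁻¹' S, hS.preimage ?_ ?_ Prod.fst_surjective, ?_⟩
  · rintro x y (⟨hxy, -⟩ | ⟨-, hxy⟩)
    exacts [Or.inr hxy, Or.inl hxy]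
  · exact fun x v hv => ⟨(v, x.2), SimpleGraph.boxProd_adj.mpr (Or.inl ⟨hv, rfl⟩), rfl⟩
  · rw [← Set.prod_univ, Set.ncard_prod, Set.ncard_univ, Nat.card_eq_fintype_card, mul_comm]

lemma card_mul_F_le_F_boxProd_right [Fintype α] [Fintype β] :
    Fintype.card α * F H ≤ F (G □ H) := by
  rcases isEmpty_or_nonempty α with _ | _
  · simp
  refine mul_F_le_F fun S hS => ⟨Prod.snd ⁻¹' S, hS.preimage ?_ ?_ Prod.snd_surjective, ?_⟩
  · rintro x y (⟨-, hxy⟩ | ⟨hxy, -⟩)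
    exacts [Or.inl hxy, Or.inr hxy]
  · exact fun x v hv => ⟨(x.1, v), SimpleGraph.boxProd_adj.mpr (Or.inr ⟨hv, rfl⟩), rfl⟩
  · rw [← Set.univ_prod, Set.ncard_prod, Set.ncard_univ, Nat.card_eq_fintype_card]

end ZeroForcing

theorem failed_zf_boxProd_lower {α β : Type*} [Fintype α] [Fintype β]
    (G : SimpleGraph α) (H : SimpleGraph β) :
    max (Fintype.card β * ZeroForcing.F G) (Fintype.card α * ZeroForcing.F H) ≤
      ZeroForcing.F (G.boxProd H) :=
  max_le (ZeroForcing.card_mul_F_le_F_boxProd_left G H)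
    (ZeroForcing.card_mul_F_le_F_boxProd_right G H)
end

section
/- For integers n ≥ 3, F(P_2 □ C_n) ≥ ⌈n/2⌉ + 3⌊n/4⌋, where P_2 □ C_n is the prism over the n-cycle. -/
/-!
Cells `(i, j)` of `P₂ □ Cₙ` have row `i ∈ {0, 1}` and column `j ∈ ℤ/n`. In every block of four
columns `4k, …, 4k + 3` leave white the cells `(1, 4k)`, `(1, 4k + 2)` and `(0, 4k + 3)` and colour
the other five blue; the last `n mod 4` columns are patched so that the pattern closes up around
the cycle. The white cells then form a fort: every blue cell has either no white neighbour or at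
least two, so no force is ever possible. Each full block contributes five blue cells, and the
patch is chosen so that the total is exactly `⌈n/2⌉ + 3⌊n/4⌋`.
-/

open Finset SimpleGraph

namespace ZeroForcing

variable {V : Type*} {G : SimpleGraph V}

def IsFort (G : SimpleGraph V) (W : Set V) : Prop :=
  W.Nonempty ∧ ∀ u ∉ W, (∀ v, G.Adj u v → v ∉ W) ∨
    ∃ w₁ ∈ W, ∃ w₂ ∈ W, w₁ ≠ w₂ ∧ G.Adj u w₁ ∧ G.Adj u w₂

theorem step_eq_self_of_isFort_compl {S : Set V} (h : IsFort G Sᶜ) : step G S = S := by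
  refine Set.union_eq_left.mpr ?_
  rintro v ⟨u, hu, huv, hforce⟩
  by_contra hv
  rcases h.2 u (Set.notMem_compl_iff.mpr hu) with hnone | ⟨w₁, hw₁, w₂, hw₂, hne, hu₁, hu₂⟩
  · exact hnone v huv hv
  · exact hne ((hforce w₁ hu₁ hw₁).trans (hforce w₂ hu₂ hw₂).symm)

theorem isFailedSet_of_isFort_compl {S : Set V} (h : IsFort G Sᶜ) : IsFailedSet G S := by
  rintro ⟨k, hk⟩
  rw [Function.iterate_fixed (step_eq_self_of_isFort_compl h)] at hk
  obtain ⟨v, hv⟩ := h.1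
  exact hv (hk ▸ Set.mem_univ v)

theorem IsFailedSet.ncard_le_F [Finite V] {S : Set V} (h : IsFailedSet G S) : S.ncard ≤ F G :=
  le_csSup ⟨Nat.card V, by rintro k ⟨T, rfl, -⟩; exact Set.ncard_le_card T⟩ ⟨S, rfl, h⟩

end ZeroForcing

theorem SimpleGraph.cycleGraph_adj_iff_val {n : ℕ} (hn : 2 ≤ n) {u v : Fin n} :
    (cycleGraph n).Adj u v ↔ u.val = v.val + 1 ∨ v.val = u.val + 1 ∨
      u.val = 0 ∧ v.val + 1 = n ∨ v.val = 0 ∧ u.val + 1 = n := by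
  have val_sub_eq_one (a b : Fin n) :
      (a - b).val = 1 ↔ a.val = b.val + 1 ∨ a.val = 0 ∧ b.val + 1 = n := by
    rcases le_or_gt b a with h | h
    · rw [Fin.coe_sub_iff_le.mpr h]; omega
    · rw [Fin.coe_sub_iff_lt.mpr h]; omega
  rw [cycleGraph_adj', val_sub_eq_one, val_sub_eq_one]
  tauto

theorem Set.ncard_setOf_fin_prod_fin {m n : ℕ} (P : ℕ → ℕ → Prop) [DecidableRel P] :
    {p : Fin m × Fin n | P p.1 p.2}.ncard =
      ∑ i ∈ Finset.range m, #{j ∈ Finset.range n | P i j} := by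
  rw [Set.ncard_eq_toFinset_card', Set.toFinset_ofPred, card_filter, Fintype.sum_prod_type,
    Fin.sum_univ_eq_sum_range (fun i => ∑ j : Fin n, if P i j then 1 else 0)]
  refine sum_congr rfl fun i _ => ?_
  rw [card_filter, Fin.sum_univ_eq_sum_range (fun j => if P i j then 1 else 0)]

namespace ZeroForcing

def PrismAdj (n i j i' j' : ℕ) : Prop :=
  i ≠ i' ∧ j = j' ∨ i = i' ∧ (j = j' + 1 ∨ j' = j + 1 ∨ j = 0 ∧ j' + 1 = n ∨ j' = 0 ∧ j + 1 = n)

theorem prism_adj_iff {n : ℕ} (hn : 2 ≤ n) {x y : Fin 2 × Fin n} :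
    (pathGraph 2 □ cycleGraph n).Adj x y ↔ PrismAdj n x.1 x.2 y.1 y.2 := by
  simp only [boxProd_adj, pathGraph_two_eq_top, top_adj, cycleGraph_adj_iff_val hn, PrismAdj,
    ne_eq, Fin.ext_iff]
  tauto

theorem isFort_prism_compl_of_coords {n : ℕ} (hn : 2 ≤ n) {P : ℕ → ℕ → Prop}
    (hne : ∃ i < 2, ∃ j < n, ¬P i j)
    (h : ∀ i < 2, ∀ j < n, P i j →
      (∀ i' < 2, ∀ j' < n, PrismAdj n i j i' j' → P i' j') ∨
      ∃ i₁ j₁ i₂ j₂, i₁ < 2 ∧ j₁ < n ∧ i₂ < 2 ∧ j₂ < n ∧ (i₁ ≠ i₂ ∨ j₁ ≠ j₂) ∧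
        ¬P i₁ j₁ ∧ ¬P i₂ j₂ ∧ PrismAdj n i j i₁ j₁ ∧ PrismAdj n i j i₂ j₂) :
    IsFort (pathGraph 2 □ cycleGraph n) {p | P p.1 p.2}ᶜ := by
  refine ⟨?_, ?_⟩
  · obtain ⟨i, hi, j, hj, hP⟩ := hne
    exact ⟨(⟨i, hi⟩, ⟨j, hj⟩), hP⟩
  rintro ⟨⟨i, hi⟩, ⟨j, hj⟩⟩ hu
  rcases h i hi j hj (Set.notMem_compl_iff.mp hu) with
    hall | ⟨i₁, j₁, i₂, j₂, hi₁, hj₁, hi₂, hj₂, hne, hP₁, hP₂, hadj₁, hadj₂⟩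
  · refine Or.inl ?_
    rintro ⟨⟨i', hi'⟩, ⟨j', hj'⟩⟩ hadj hP'
    exact hP' (hall i' hi' j' hj' ((prism_adj_iff hn).mp hadj))
  · refine Or.inr ⟨(⟨i₁, hi₁⟩, ⟨j₁, hj₁⟩), hP₁, (⟨i₂, hi₂⟩, ⟨j₂, hj₂⟩), hP₂, ?_,
      (prism_adj_iff hn).mpr hadj₁, (prism_adj_iff hn).mpr hadj₂⟩
    simpa only [ne_eq, Prod.ext_iff, Fin.ext_iff, not_and_or] using hne

def IsPrismBlue (n i j : ℕ) : Prop :=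
  i = 0 ∧ j % 4 ≠ 3 ∧ j + 1 < n ∨
    i = 1 ∧ (j % 2 = 1 ∧ j < 4 * (n / 4) ∨ j + 1 = n ∧ n % 4 = 1)

instance (n : ℕ) : DecidableRel (IsPrismBlue n) := fun _ _ => by
  unfold IsPrismBlue; infer_instance

def prismBlue (n : ℕ) : Set (Fin 2 × Fin n) := {p | IsPrismBlue n p.1 p.2}

theorem ncard_prismBlue (n : ℕ) : (prismBlue n).ncard = (n + 1) / 2 + 3 * (n / 4) := by
  have top : #{j ∈ range n | IsPrismBlue n 0 j} = (n - 1) - (n - 1) / 4 := by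
    have : {j ∈ range n | IsPrismBlue n 0 j} = {j ∈ range (n - 1) | ¬ 4 ∣ j + 1} := by
      ext j
      simp only [IsPrismBlue, mem_filter, mem_range, true_and, zero_ne_one, false_and, or_false]
      omega
    rw [this, filter_not, card_sdiff_of_subset (filter_subset _ _), card_range, Nat.card_multiples]
  have bottom :
      #{j ∈ range n | IsPrismBlue n 1 j} = 2 * (n / 4) + if n % 4 = 1 then 1 else 0 := by
    have : {j ∈ range n | IsPrismBlue n 1 j} =
        {j ∈ range (4 * (n / 4)) | 2 ∣ j + 1} ∪ {j ∈ range n | j + 1 = n ∧ n % 4 = 1} := by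
      ext j
      simp only [IsPrismBlue, mem_filter, mem_range, mem_union, true_and, one_ne_zero, false_and,
        false_or]
      omega
    have last : #{j ∈ range n | j + 1 = n ∧ n % 4 = 1} = if n % 4 = 1 then 1 else 0 := by
      split_ifs with h
      · refine card_eq_one.mpr ⟨n - 1, ?_⟩
        ext j
        simp only [mem_filter, mem_range, mem_singleton]
        omega
      · exact card_eq_zero.mpr (filter_false_of_mem fun j _ => by omega)
    rw [this, card_union_of_disjoint, Nat.card_multiples, last]
    · omega
    · exact disjoint_left.mpr fun j h₁ h₂ => by simp only [mem_filter, mem_range] at h₁ h₂; omega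
  rw [prismBlue, Set.ncard_setOf_fin_prod_fin, sum_range_succ, sum_range_one, top, bottom]
  split_ifs <;> omega

theorem isFort_compl_prismBlue {n : ℕ} (hn : 3 ≤ n) :
    IsFort (pathGraph 2 □ cycleGraph n) (prismBlue n)ᶜ := by
  refine isFort_prism_compl_of_coords (by omega)
    ⟨0, by omega, n - 1, by omega, by unfold IsPrismBlue; omega⟩ ?_
  intro i hi j hj hblue
  simp only [IsPrismBlue, PrismAdj] at hblue ⊢
  rcases hblue with ⟨rfl, hj4, hjn⟩ | ⟨rfl, ⟨hodd, hjq⟩ | ⟨hjn, hr⟩⟩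
  · by_cases hinner : j % 4 = 1 ∧ j < 4 * (n / 4)
    · exact Or.inl fun i' _ j' _ hadj => by omega
    obtain h | h | h : j = 0 ∨ j % 4 = 0 ∧ 0 < j ∨ j % 4 ≠ 0 := by omega
    · exact Or.inr ⟨1, 0, 0, n - 1, by omega⟩
    · exact Or.inr ⟨1, j, 0, j - 1, by omega⟩
    · exact Or.inr ⟨1, j, 0, j + 1, by omega⟩
  · obtain h | h : j % 4 = 3 ∨ j % 4 = 1 := by omega
    · exact Or.inr ⟨1, j - 1, 0, j, by omega⟩
    · exact Or.inr ⟨1, j - 1, 1, j + 1, by omega⟩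
  · exact Or.inr ⟨0, j, 1, 0, by omega⟩

end ZeroForcing

theorem failed_zf_prism_lower (n : ℕ) (hn : 3 ≤ n) :
    (n + 1) / 2 + 3 * (n / 4) ≤
      ZeroForcing.F ((SimpleGraph.pathGraph 2).boxProd (SimpleGraph.cycleGraph n)) := by
  rw [← ZeroForcing.ncard_prismBlue n]
  exact (ZeroForcing.isFailedSet_of_isFort_compl (ZeroForcing.isFort_compl_prismBlue hn)).ncard_le_F
end
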